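/- Let d, k be integers with 2 ≤ k ≤ d−2, and let X be a finite set of k-dimensional linear subspaces of ℝ^d that is a Grassmann 4-design. For V ∈ X define R_V := √(d/(k(d−k)))·(P_V − (k/d)I_d) and set D_0 := d(d+1)/2 − 1. Then ∑_{V,W∈X} tr(R_V R_W) = 0 and ∑_{V,W∈X} (tr(R_V R_W))^2 = |X|^2 / D_0; that is, the image of X under V ↦ R_V is a spherical 2-design on the unit sphere of the space of traceless symmetric d×d matrices with the Frobenius inner product. -/

import Mathlib

open scoped BigOperators

/-- Orthogonal projection onto a subspace `V` of `ℝ^d`, as a linear endomorphism. -/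
noncomputable def proj {d : ℕ} (V : Submodule ℝ (EuclideanSpace ℝ (Fin d))) :
    EuclideanSpace ℝ (Fin d) →ₗ[ℝ] EuclideanSpace ℝ (Fin d) :=
  V.subtype ∘ₗ (Submodule.orthogonalProjectionOnto V).toLinearMap

/-- `tr(P_V P_W)`. -/
noncomputable def trP {d : ℕ} (V W : Submodule ℝ (EuclideanSpace ℝ (Fin d))) : ℝ :=
  LinearMap.trace ℝ (EuclideanSpace ℝ (Fin d)) (proj V ∘ₗ proj W)

/-- `tr((P_V P_W)²)`. -/
noncomputable def trP2 {d : ℕ} (V W : Submodule ℝ (EuclideanSpace ℝ (Fin d))) : ℝ :=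
  LinearMap.trace ℝ (EuclideanSpace ℝ (Fin d)) ((proj V ∘ₗ proj W) ∘ₗ (proj V ∘ₗ proj W))

/-- Zonal polynomial `P_{(2)}` as a function of `t₁ = tr(P_V P_W)`. -/
noncomputable def P2 (d k : ℕ) (t1 : ℝ) : ℝ :=
  ((k : ℝ) - (d : ℝ) * (t1 / k)) / ((k : ℝ) - d)

/-- `c₄ = (3/(k(k+2)))·(t₂ + (1/3)(t₁² − t₂))`. -/
noncomputable def c4 (k : ℕ) (t1 t2 : ℝ) : ℝ :=
  (3 / ((k : ℝ) * ((k : ℝ) + 2))) * (t2 + (1 / 3) * (t1 ^ 2 - t2))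

/-- `c₂₂ = (1/(k(k−1)))·(t₁² − t₂)`. -/
noncomputable def c22 (k : ℕ) (t1 t2 : ℝ) : ℝ :=
  (1 / ((k : ℝ) * ((k : ℝ) - 1))) * (t1 ^ 2 - t2)

/-- Unnormalized zonal polynomial `P'_{(4)}`. -/
noncomputable def P4' (d k : ℕ) (t1 t2 : ℝ) : ℝ :=
  1 - (2 * ((d : ℝ) + 2) / k) * (t1 / k) +
    (((d : ℝ) + 2) * ((d : ℝ) + 4) / ((k : ℝ) * ((k : ℝ) + 2))) * c4 k t1 t2

/-- Unnormalized zonal polynomial `P'_{(2,2)}`. -/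
noncomputable def P22' (d k : ℕ) (t1 t2 : ℝ) : ℝ :=
  1 - (2 * ((d : ℝ) - 1) / k) * (t1 / k) +
    (((d : ℝ) - 1) * ((d : ℝ) - 2) / ((k : ℝ) * ((k : ℝ) - 1))) * c22 k t1 t2

/-- The Conway–Hardin–Sloane embedding `R_V = √(d/(k(d−k)))·(P_V − (k/d)·Id)`. -/
noncomputable def Rmap (d k : ℕ) (V : Submodule ℝ (EuclideanSpace ℝ (Fin d))) :
    EuclideanSpace ℝ (Fin d) →ₗ[ℝ] EuclideanSpace ℝ (Fin d) :=
  Real.sqrt ((d : ℝ) / ((k : ℝ) * ((d : ℝ) - k))) •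
    (proj V - ((k : ℝ) / (d : ℝ)) • LinearMap.id)

/-!
Since `R_V = λ^{1/2} (P_V - (k/d) I)` with `λ = d / (k (d - k))`, one has
`tr(R_V R_W) = λ (t₁ - k²/d)` with `t₁ = tr(P_V P_W)`, so both sums only involve the moments
`∑ t₁` and `∑ t₁²` over `X × X`. The zonal polynomials are affine in `t₁`, `t₁²` and `t₂`, so the
three design conditions are linear equations in `∑ t₁`, `∑ t₁²`, `∑ t₂`: `P_{(2)}` gives
`∑ t₁ = |X|² k²/d`, and then `P'_{(4)}` and `P'_{(2,2)}` give `∑ t₁² + 2 ∑ t₂` and `∑ t₁² - ∑ t₂`,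
hence `∑ t₁²`.
-/

lemma trace_proj {d : ℕ} (V : Submodule ℝ (EuclideanSpace ℝ (Fin d))) :
    LinearMap.trace ℝ (EuclideanSpace ℝ (Fin d)) (proj V) = Module.finrank ℝ V := by
  refine LinearMap.IsProj.trace ⟨fun x => (V.orthogonalProjectionOnto x).2, fun x hx => ?_⟩
  exact Submodule.starProjection_eq_self_iff.2 hx

lemma trace_Rmap_comp {d k : ℕ} (hd : d ≠ 0) {V W : Submodule ℝ (EuclideanSpace ℝ (Fin d))}
    (hV : Module.finrank ℝ V = k) (hW : Module.finrank ℝ W = k) :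
    LinearMap.trace ℝ (EuclideanSpace ℝ (Fin d)) (Rmap d k V ∘ₗ Rmap d k W) =
      d / (k * (d - k)) * (trP V W - k ^ 2 / d) := by
  have hkd : (k : ℝ) ≤ d := by
    simpa [← hV, finrank_euclideanSpace] using Submodule.finrank_le V
  have hsq : Real.sqrt ((d : ℝ) / (k * (d - k))) ^ 2 = d / (k * (d - k)) :=
    Real.sq_sqrt (div_nonneg d.cast_nonneg (mul_nonneg k.cast_nonneg (by linarith)))
  simp only [Rmap, LinearMap.smul_comp, LinearMap.comp_smul, LinearMap.sub_comp,
    LinearMap.comp_sub, LinearMap.comp_id, LinearMap.id_comp, map_smul, map_sub, smul_eq_mul,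
    LinearMap.trace_id, trace_proj, hV, hW, finrank_euclideanSpace, Fintype.card_fin, trP]
  generalize Real.sqrt ((d : ℝ) / (k * (d - k))) = s at hsq ⊢
  rw [← hsq]
  field_simp
  ring

section

variable {d k : ℕ} {X : Finset (Submodule ℝ (EuclideanSpace ℝ (Fin d)))}

lemma sum_sum_trace_Rmap_comp (hd : d ≠ 0) (hdim : ∀ V ∈ X, Module.finrank ℝ V = k) :
    ∑ V ∈ X, ∑ W ∈ X, LinearMap.trace ℝ _ (Rmap d k V ∘ₗ Rmap d k W) =
      d / (k * (d - k)) * (∑ V ∈ X, ∑ W ∈ X, trP V W - X.card ^ 2 * k ^ 2 / d) := by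
  rw [Finset.sum_congr rfl fun V hV => Finset.sum_congr rfl fun W hW =>
    trace_Rmap_comp hd (hdim V hV) (hdim W hW)]
  simp only [Finset.sum_sub_distrib, ← Finset.mul_sum, Finset.sum_const, nsmul_eq_mul]
  ring

lemma sum_sum_sq_trace_Rmap_comp (hd : d ≠ 0) (hdim : ∀ V ∈ X, Module.finrank ℝ V = k) :
    ∑ V ∈ X, ∑ W ∈ X, (LinearMap.trace ℝ _ (Rmap d k V ∘ₗ Rmap d k W)) ^ 2 =
      (d / (k * (d - k))) ^ 2 * (∑ V ∈ X, ∑ W ∈ X, trP V W ^ 2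
        - 2 * k ^ 2 / d * ∑ V ∈ X, ∑ W ∈ X, trP V W + X.card ^ 2 * k ^ 4 / d ^ 2) := by
  rw [Finset.sum_congr rfl fun V hV => Finset.sum_congr rfl fun W hW => by
    rw [trace_Rmap_comp hd (hdim V hV) (hdim W hW)]]
  simp only [mul_pow, sub_sq, Finset.sum_add_distrib, Finset.sum_sub_distrib, ← Finset.mul_sum,
    ← Finset.sum_mul, Finset.sum_const, nsmul_eq_mul]
  ring

lemma sum_sum_trP_of_sum_sum_P2_eq_zero (hk : 0 < k) (hkd : k < d)
    (h : ∑ V ∈ X, ∑ W ∈ X, P2 d k (trP V W) = 0) :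
    ∑ V ∈ X, ∑ W ∈ X, trP V W = X.card ^ 2 * k ^ 2 / d := by
  have hk0 : (k : ℝ) ≠ 0 := by positivity
  have hd0 : (d : ℝ) ≠ 0 := by exact_mod_cast (hk.trans hkd).ne'
  have hkd' : (k : ℝ) - d ≠ 0 := sub_ne_zero.2 (by exact_mod_cast hkd.ne)
  have hP2 (t : ℝ) : P2 d k t = k / (k - d) - d / (k * (k - d)) * t := by
    simp only [P2]
    field_simp
  simp only [hP2, Finset.sum_sub_distrib, ← Finset.mul_sum, Finset.sum_const, nsmul_eq_mul] at h
  linear_combination (norm := (field_simp; ring)) -(k * (k - d) / d) * h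

lemma sum_sum_sq_trP_add_two_mul_sum_sum_trP2 (hk : 0 < k) (hd : 0 < d)
    (hS1 : ∑ V ∈ X, ∑ W ∈ X, trP V W = X.card ^ 2 * k ^ 2 / d)
    (h : ∑ V ∈ X, ∑ W ∈ X, P4' d k (trP V W) (trP2 V W) = 0) :
    ∑ V ∈ X, ∑ W ∈ X, trP V W ^ 2 + 2 * ∑ V ∈ X, ∑ W ∈ X, trP2 V W =
      X.card ^ 2 * k ^ 2 * (k + 2) ^ 2 / (d * (d + 2)) := by
  have hd0 : (d : ℝ) ≠ 0 := by positivity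
  have hP4 (t₁ t₂ : ℝ) : P4' d k t₁ t₂ = 1 - 2 * (d + 2) / k ^ 2 * t₁
      + (d + 2) * (d + 4) / (k ^ 2 * (k + 2) ^ 2) * (t₁ ^ 2 + 2 * t₂) := by
    simp only [P4', c4]
    field_simp
    ring
  simp only [hP4, Finset.sum_add_distrib, Finset.sum_sub_distrib, ← Finset.mul_sum,
    Finset.sum_const, nsmul_eq_mul, hS1] at h
  linear_combination (norm := (field_simp; ring)) k ^ 2 * (k + 2) ^ 2 / ((d + 2) * (d + 4)) * h

lemma sum_sum_sq_trP_sub_sum_sum_trP2 (hk : 2 ≤ k) (hd : 2 < d)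
    (hS1 : ∑ V ∈ X, ∑ W ∈ X, trP V W = X.card ^ 2 * k ^ 2 / d)
    (h : ∑ V ∈ X, ∑ W ∈ X, P22' d k (trP V W) (trP2 V W) = 0) :
    ∑ V ∈ X, ∑ W ∈ X, trP V W ^ 2 - ∑ V ∈ X, ∑ W ∈ X, trP2 V W =
      X.card ^ 2 * k ^ 2 * (k - 1) ^ 2 / (d * (d - 1)) := by
  have hk1 : (k : ℝ) - 1 ≠ 0 := sub_ne_zero.2 (by norm_cast; omega)
  have hd1 : (d : ℝ) - 1 ≠ 0 := sub_ne_zero.2 (by norm_cast; omega)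
  have hd2 : (d : ℝ) - 2 ≠ 0 := sub_ne_zero.2 (by norm_cast; omega)
  have hP22 (t₁ t₂ : ℝ) : P22' d k t₁ t₂ = 1 - 2 * (d - 1) / k ^ 2 * t₁
      + (d - 1) * (d - 2) / (k ^ 2 * (k - 1) ^ 2) * (t₁ ^ 2 - t₂) := by
    simp only [P22', c22]
    field_simp
  simp only [hP22, Finset.sum_add_distrib, Finset.sum_sub_distrib, ← Finset.mul_sum,
    Finset.sum_const, nsmul_eq_mul, hS1] at h
  linear_combination (norm := (field_simp; ring)) k ^ 2 * (k - 1) ^ 2 / ((d - 1) * (d - 2)) * h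

end

theorem stmt14_general (d k : ℕ) (hk : 2 ≤ k) (hkd : k ≤ d - 2)
    (X : Finset (Submodule ℝ (EuclideanSpace ℝ (Fin d))))
    (hdim : ∀ V ∈ X, Module.finrank ℝ V = k)
    (hdes2 : ∑ V ∈ X, ∑ W ∈ X, P2 d k (trP V W) = 0)
    (hdes4 : ∑ V ∈ X, ∑ W ∈ X, P4' d k (trP V W) (trP2 V W) = 0)
    (hdes22 : ∑ V ∈ X, ∑ W ∈ X, P22' d k (trP V W) (trP2 V W) = 0) :
    (∑ V ∈ X, ∑ W ∈ X,
        LinearMap.trace ℝ (EuclideanSpace ℝ (Fin d)) (Rmap d k V ∘ₗ Rmap d k W)) = 0 ∧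
    (∑ V ∈ X, ∑ W ∈ X,
        (LinearMap.trace ℝ (EuclideanSpace ℝ (Fin d)) (Rmap d k V ∘ₗ Rmap d k W)) ^ 2) =
      (X.card : ℝ) ^ 2 / ((d : ℝ) * ((d : ℝ) + 1) / 2 - 1) := by
  have hkd' : k + 2 ≤ d := by omega
  have hS1 := sum_sum_trP_of_sum_sum_P2_eq_zero (X := X) (by omega) (by omega) hdes2
  have hA := sum_sum_sq_trP_add_two_mul_sum_sum_trP2 (by omega) (by omega) hS1 hdes4
  have hB := sum_sum_sq_trP_sub_sum_sum_trP2 hk (by omega) hS1 hdes22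
  rw [sum_sum_trace_Rmap_comp (by omega) hdim, sum_sum_sq_trace_Rmap_comp (by omega) hdim, hS1]
  refine ⟨by ring, ?_⟩
  have hd : (d : ℝ) ≠ 0 := by norm_cast; omega
  have hdk : (d : ℝ) - k ≠ 0 := sub_ne_zero.2 (by norm_cast; omega)
  have hd1 : (d : ℝ) - 1 ≠ 0 := sub_ne_zero.2 (by norm_cast; omega)
  rw [show (d : ℝ) * (d + 1) / 2 - 1 = (d + 2) * (d - 1) / 2 by ring]
  linear_combination (norm := (field_simp; ring)) (d / (k * (d - k))) ^ 2 / 3 * (hA + 2 * hB)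

/-- Lemma: a Grassmann 4-design `X ⊆ G_{k,d}` (characterized by the
vanishing of the sums of the zonal polynomials `P_{(2)}`, `P'_{(4)}`, `P'_{(2,2)}`)
is mapped by `V ↦ R_V` to a spherical 2-design:
`∑_{V,W∈X} tr(R_V R_W) = 0` and `∑_{V,W∈X} tr(R_V R_W)² = |X|²/D₀`,
where `D₀ = d(d+1)/2 − 1`. -/
theorem stmt14 (d k : ℕ) (hk : 2 ≤ k) (hkd : k ≤ d - 2) (hd : 4 ≤ d)
    (X : Finset (Submodule ℝ (EuclideanSpace ℝ (Fin d))))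
    (hdim : ∀ V ∈ X, Module.finrank ℝ V = k)
    (hdes2 : ∑ V ∈ X, ∑ W ∈ X, P2 d k (trP V W) = 0)
    (hdes4 : ∑ V ∈ X, ∑ W ∈ X, P4' d k (trP V W) (trP2 V W) = 0)
    (hdes22 : ∑ V ∈ X, ∑ W ∈ X, P22' d k (trP V W) (trP2 V W) = 0) :
    (∑ V ∈ X, ∑ W ∈ X,
        LinearMap.trace ℝ (EuclideanSpace ℝ (Fin d)) (Rmap d k V ∘ₗ Rmap d k W)) = 0 ∧
    (∑ V ∈ X, ∑ W ∈ X,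
        (LinearMap.trace ℝ (EuclideanSpace ℝ (Fin d)) (Rmap d k V ∘ₗ Rmap d k W)) ^ 2) =
      (X.card : ℝ) ^ 2 / ((d : ℝ) * ((d : ℝ) + 1) / 2 - 1) :=
  stmt14_general d k hk hkd X hdim hdes2 hdes4 hdes22
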